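/- Let n ≥ 1 and let i = (i_0, i_1, …, i_{n−1}) be a sequence of integers with 0 ≤ i_k ≤ max{k, n−k−1} for each k. Then in the spanning subgraph D_i of Q_n whose edge set is the union over k = 0, …, n−1 of the i_k-lexical matchings M^{i_k}_{n,k}, every vertex has degree at most 2, and every connected component is a path along which the Hamming weight increases by exactly 1 in each step; in particular, the components of D_i decompose the vertex set of Q_n into chains each consisting of one vertex per level in an interval of consecutive levels. -/

import Mathlib

/-!
Each matching `M^i_{n,k}` is a partial bijection between levels `k` and `k + 1`. It is a
function because distinct down-steps of `x^↑` have distinct ranks. It is injective because if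
`x ≠ x'` are sent to the same `y` by flipping bits `d ≠ d'`, the bit that comes first among the
up-steps of `y^↓` has strictly fewer predecessors in its preimage.

Hence `D_i` is the symmetric closure of a relation that raises the weight by one and is
functional in both directions; its maximal paths partition the vertices and carry exactly its
edges, and every vertex has at most one neighbour above and one below.
-/

/-- The Hamming weight of a bitstring of length `n`, i.e., its number of 1-bits. -/
def wt {n : ℕ} (x : Fin n → Bool) : ℕ := (Finset.univ.filter fun i => x i = true).card

/-- The `n`-dimensional hypercube: vertices are bitstrings of length `n`, two of which are
adjacent iff they differ in exactly one position. -/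
def cube (n : ℕ) : SimpleGraph (Fin n → Bool) where
  Adj x y := hammingDist x y = 1
  symm := by constructor; intro x y h; exact (hammingDist_comm y x).trans h
  loopless := by constructor; intro x h; simp [hammingDist_self] at h
/-- A symmetric chain in the `n`-cube: a path `(x_k, x_{k+1}, …, x_{n−k})` in `cube n`
where `x_i` has Hamming weight `i` for each `k ≤ i ≤ n − k`. -/
def IsSymChain (n : ℕ) (c : List (Fin n → Bool)) : Prop :=
  c ≠ [] ∧ c.Chain' (cube n).Adj ∧
  ∃ k : ℕ, (∀ (i : ℕ) (h : i < c.length), wt (c.get ⟨i, h⟩) = k + i) ∧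
    2 * k + (c.length - 1) = n

/-- A symmetric chain decomposition of the `n`-cube: a collection of symmetric chains
whose vertex sets partition the vertex set. -/
def IsSCD (n : ℕ) (D : Set (List (Fin n → Bool))) : Prop :=
  (∀ c ∈ D, IsSymChain n c) ∧ ∀ x : Fin n → Bool, ∃! c, c ∈ D ∧ x ∈ c

/-- The edges lying on a chain, i.e., the unordered pairs of consecutive entries. -/
def chainEdges {V : Type*} (c : List V) : Set (Sym2 V) :=
  {e | ∃ (i : ℕ) (h : i + 1 < c.length),
    e = s(c.get ⟨i, Nat.lt_of_succ_lt h⟩, c.get ⟨i + 1, h⟩)}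

/-- All edges lying on some chain of the collection `D`. -/
def scdEdges {n : ℕ} (D : Set (List (Fin n → Bool))) : Set (Sym2 (Fin n → Bool)) :=
  ⋃ c ∈ D, chainEdges c

/-- Two chain decompositions are edge-disjoint if no edge lies on a chain of one
and also on a chain of the other. -/
def EdgeDisjointSCD {n : ℕ} (D D' : Set (List (Fin n → Bool))) : Prop :=
  Disjoint (scdEdges D) (scdEdges D')
/-- The number of 1-bits among the first `j` bits of `x` (interpreting a bitstring as a
lattice path, this determines the height after `j` steps). -/
def onesUpTo {n : ℕ} (x : Fin n → Bool) (j : ℕ) : ℕ :=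
  (Finset.univ.filter fun i : Fin n => i.val < j ∧ x i = true).card

/-- The height of the lattice path of `x` after `j` steps: number of 1s minus number of 0s
among the first `j` bits (appended steps beyond the length of `x` being down-steps). -/
def hgt {n : ℕ} (x : Fin n → Bool) (j : ℕ) : ℤ := 2 * (onesUpTo x j : ℤ) - (j : ℤ)

/-- The length of the extended lattice path `x^↑`: if the final height `2·wt x − n` is `≥ −1`,
down-steps are appended until the path ends at height `−1` (total length `2·wt x + 1`);
otherwise nothing is appended. -/
def extLen {n : ℕ} (x : Fin n → Bool) : ℕ := max n (2 * wt x + 1)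

/-- Position `j` (0-indexed) of the extended path `x^↑` is a down-step: either it is a 0-bit
of `x`, or one of the appended down-steps. -/
def isDownStep {n : ℕ} (x : Fin n → Bool) (j : ℕ) : Prop :=
  j < extLen x ∧ ∀ h : j < n, x ⟨j, h⟩ = false

/-- The `i`-lexical matching `M^i_{n,k}` between levels `k` and `k+1` of the `n`-cube, as a
relation: `lexUp n k i x y` holds iff `x` lies in level `k` and `y = M^{i,↑}_{n,k}(x)`, i.e.,
`y` is obtained from `x` by flipping to 1 the 0-bit at the `i`-th down-step of `x^↑` in the
order of decreasing starting height, ties broken from right to left, counting from 0,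
provided this down-step lies within `x`. -/
def lexUp (n k i : ℕ) (x y : Fin n → Bool) : Prop :=
  wt x = k ∧ ∃ d : ℕ, d < n ∧ isDownStep x d ∧
    ({j : ℕ | isDownStep x j ∧ (hgt x d < hgt x j ∨ (hgt x j = hgt x d ∧ d < j))}).ncard = i ∧
    y = fun t : Fin n => if t.val = d then true else x t

open Relation Relator

section MaximalPath

variable {V : Type*} {R : V → V → Prop} {w : V → ℕ} {l l' : List V} {x y z : V}

structure IsMaximalPath (R : V → V → Prop) (l : List V) : Prop where
  ne_nil : l ≠ []
  isChain : l.IsChain R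
  head_not_target : ∀ a ∈ l.head?, ∀ z, ¬ R z a
  getLast_not_source : ∀ a ∈ l.getLast?, ∀ z, ¬ R a z

theorem IsMaximalPath.reverse (hl : IsMaximalPath R l) : IsMaximalPath (flip R) l.reverse where
  ne_nil := by simpa using hl.ne_nil
  isChain := List.isChain_reverse.mpr hl.isChain
  head_not_target a ha z := by
    rw [List.head?_reverse] at ha
    exact hl.getLast_not_source a ha z
  getLast_not_source a ha z := by
    rw [List.getLast?_reverse] at ha
    exact hl.head_not_target a ha z

theorem IsMaximalPath.exists_succ_getElem (hR : RightUnique R) (hl : IsMaximalPath R l)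
    {t : ℕ} (ht : t < l.length) (hz : R l[t] z) : ∃ h : t + 1 < l.length, l[t + 1] = z := by
  by_cases hlast : t + 1 < l.length
  · exact ⟨hlast, hR (hl.isChain.getElem t hlast) hz⟩
  · have : l.getLast? = some l[t] := by
      rw [List.getLast?_eq_getElem?, List.getElem?_eq_getElem (by omega)]
      congr 2
      omega
    exact absurd hz (hl.getLast_not_source _ this z)

theorem IsMaximalPath.mem_of_rel (hR : RightUnique R) (hl : IsMaximalPath R l) (hy : y ∈ l)
    (hyz : R y z) : z ∈ l := by
  obtain ⟨t, ht, rfl⟩ := List.getElem_of_mem hy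
  obtain ⟨h, rfl⟩ := hl.exists_succ_getElem hR ht hyz
  exact List.getElem_mem h

theorem IsMaximalPath.mem_of_reflTransGen (hR : RightUnique R) (hl : IsMaximalPath R l)
    (hx : x ∈ l) (hxy : ReflTransGen R x y) : y ∈ l := by
  induction hxy with
  | refl => exact hx
  | tail _ hyz ih => exact hl.mem_of_rel hR ih hyz

theorem IsMaximalPath.mem_of_reflTransGen_flip (hL : LeftUnique R) (hl : IsMaximalPath R l)
    (hx : x ∈ l) (hyx : ReflTransGen R y x) : y ∈ l :=
  List.mem_reverse.mp <| hl.reverse.mem_of_reflTransGen hL.flip (List.mem_reverse.mpr hx)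
    (reflTransGen_swap.mpr hyx)

theorem List.IsChain.reflTransGen_or (hl : l.IsChain R) (hx : x ∈ l) (hy : y ∈ l) :
    ReflTransGen R x y ∨ ReflTransGen R y x := by
  have hpw := List.pairwise_iff_getElem.mp
    (List.isChain_iff_pairwise.mp (hl.imp fun _ _ => ReflTransGen.single))
  obtain ⟨i, hi, rfl⟩ := List.getElem_of_mem hx
  obtain ⟨j, hj, rfl⟩ := List.getElem_of_mem hy
  rcases lt_trichotomy i j with hij | rfl | hji
  · exact .inl (hpw i j hi hj hij)
  · exact .inl .refl
  · exact .inr (hpw j i hj hi hji)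

theorem List.IsChain.weight_getElem (hw : ∀ ⦃x y⦄, R x y → w y = w x + 1)
    (hl : l.IsChain R) (t : ℕ) (ht : t < l.length) : w l[t] = w (l[0]'(by omega)) + t := by
  induction t with
  | zero => rfl
  | succ t ih => rw [hw (hl.getElem t ht), ih (by omega), add_assoc]

theorem List.IsChain.pairwise_weight_lt (hw : ∀ ⦃x y⦄, R x y → w y = w x + 1)
    (hl : l.IsChain R) : l.Pairwise fun a b => w a < w b := by
  have : (l.map w).IsChain (· < ·) :=
    List.isChain_map_of_isChain w (fun a b h => by rw [hw h]; exact Nat.lt_succ_self _) hl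
  exact List.pairwise_map.mp (List.isChain_iff_pairwise.mp this)

/-- Both paths are closed under `R` in either direction, so each contains the other; being
sorted by weight, they are then equal. -/
theorem IsMaximalPath.eq_of_mem (hw : ∀ ⦃x y⦄, R x y → w y = w x + 1) (hR : BiUnique R)
    (hl : IsMaximalPath R l) (hl' : IsMaximalPath R l') (hx : x ∈ l) (hx' : x ∈ l') :
    l = l' := by
  have hsub : ∀ {l l'}, IsMaximalPath R l → IsMaximalPath R l' → x ∈ l → x ∈ l' →
      ∀ y, y ∈ l → y ∈ l' := fun hl hl' hx hx' y hy =>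
    (hl.isChain.reflTransGen_or hx hy).elim (hl'.mem_of_reflTransGen hR.2 hx')
      (hl'.mem_of_reflTransGen_flip hR.1 hx')
  have : Std.Irrefl fun a b : V => w a < w b := ⟨fun a => lt_irrefl (w a)⟩
  have : Std.Antisymm fun a b : V => w a < w b :=
    ⟨fun _ _ h h' => absurd (h.trans h') (lt_irrefl _)⟩
  exact (hl.isChain.pairwise_weight_lt hw).eq_of_mem_iff (hl'.isChain.pairwise_weight_lt hw)
    fun y => ⟨hsub hl hl' hx hx' y, hsub hl' hl hx' hx y⟩

theorem exists_minimal_reflTransGen (hw : ∀ ⦃x y⦄, R x y → w y = w x + 1) (x : V) :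
    ∃ r, (∀ z, ¬ R z r) ∧ ReflTransGen R r x := by
  by_cases h : ∃ z, R z x
  · obtain ⟨z, hz⟩ := h
    obtain ⟨r, hr, hrz⟩ := exists_minimal_reflTransGen hw z
    exact ⟨r, hr, hrz.tail hz⟩
  · push Not at h
    exact ⟨x, h, .refl⟩
termination_by w x
decreasing_by rw [hw hz]; exact Nat.lt_succ_self _

theorem exists_isChain_to_maximal (hw : ∀ ⦃x y⦄, R x y → w y = w x + 1) {N : ℕ}
    (hN : ∀ x, w x ≤ N) (x : V) :
    ∃ l : List V, l.head? = some x ∧ l.IsChain R ∧ ∀ a ∈ l.getLast?, ∀ z, ¬ R a z := by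
  by_cases h : ∃ y, R x y
  · obtain ⟨y, hy⟩ := h
    obtain ⟨l, hhead, hchain, hlast⟩ := exists_isChain_to_maximal hw hN y
    have hne : l ≠ [] := by rintro rfl; simp at hhead
    refine ⟨x :: l, rfl, List.isChain_cons.mpr ⟨by simpa [hhead] using hy, hchain⟩, ?_⟩
    rwa [List.getLast?_cons_of_ne_nil hne]
  · push Not at h
    exact ⟨[x], rfl, List.isChain_singleton x, by simpa using h⟩
termination_by N - w x
decreasing_by have := hN y; have := hw hy; omega

theorem exists_isMaximalPath_mem (hw : ∀ ⦃x y⦄, R x y → w y = w x + 1) {N : ℕ}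
    (hN : ∀ x, w x ≤ N) (hR : RightUnique R) (x : V) : ∃ l, IsMaximalPath R l ∧ x ∈ l := by
  obtain ⟨r, hr, hrx⟩ := exists_minimal_reflTransGen hw x
  obtain ⟨l, hhead, hchain, hlast⟩ := exists_isChain_to_maximal hw hN r
  have hl : IsMaximalPath R l :=
    ⟨by rintro rfl; simp at hhead, hchain, by simpa [hhead] using hr, hlast⟩
  exact ⟨l, hl, hl.mem_of_reflTransGen hR (List.mem_of_mem_head? hhead) hrx⟩

theorem iUnion_chainEdges_isMaximalPath (hw : ∀ ⦃x y⦄, R x y → w y = w x + 1) {N : ℕ}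
    (hN : ∀ x, w x ≤ N) (hR : RightUnique R) :
    (⋃ l ∈ {l | IsMaximalPath R l}, chainEdges l) = {e | ∃ x y, R x y ∧ e = s(x, y)} := by
  ext e
  simp only [Set.mem_iUnion, Set.mem_ofPred_eq, exists_prop]
  constructor
  · rintro ⟨l, hl, t, ht, rfl⟩
    exact ⟨_, _, hl.isChain.getElem t ht, rfl⟩
  · rintro ⟨x, y, hxy, rfl⟩
    obtain ⟨l, hl, hx⟩ := exists_isMaximalPath_mem hw hN hR x
    obtain ⟨t, ht, rfl⟩ := List.getElem_of_mem hx
    obtain ⟨h, rfl⟩ := hl.exists_succ_getElem hR ht hxy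
    exact ⟨l, hl, t, h, rfl⟩

theorem exists_path_decomposition (hw : ∀ ⦃x y⦄, R x y → w y = w x + 1) {N : ℕ}
    (hN : ∀ x, w x ≤ N) (hR : BiUnique R) :
    ∃ D : Set (List V),
      (∀ l ∈ D, l ≠ [] ∧ l.IsChain R ∧
        ∃ a : ℕ, ∀ (t : ℕ) (h : t < l.length), w (l.get ⟨t, h⟩) = a + t) ∧
      (∀ x, ∃! l, l ∈ D ∧ x ∈ l) ∧
      (⋃ l ∈ D, chainEdges l) = {e | ∃ x y, R x y ∧ e = s(x, y)} := by
  refine ⟨{l | IsMaximalPath R l}, fun l hl => ⟨hl.ne_nil, hl.isChain,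
    w (l[0]'(List.length_pos_iff.mpr hl.ne_nil)), hl.isChain.weight_getElem hw⟩, fun x => ?_,
    iUnion_chainEdges_isMaximalPath hw hN hR.2⟩
  obtain ⟨l, hl, hx⟩ := exists_isMaximalPath_mem hw hN hR.2 x
  exact ⟨l, ⟨hl, hx⟩, fun l' ⟨hl', hx'⟩ => hl'.eq_of_mem hw hR hl hx' hx⟩

theorem ncard_neighborSet_fromRel_le_two (hR : BiUnique R) (v : V) :
    ((SimpleGraph.fromRel R).neighborSet v).ncard ≤ 2 := by
  obtain ⟨a, ha⟩ : ∃ a, ∀ u, R v u → u = a := by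
    by_cases h : ∃ a, R v a
    · obtain ⟨a, hva⟩ := h
      exact ⟨a, fun u hvu => hR.2 hvu hva⟩
    · exact ⟨v, fun u hvu => absurd ⟨u, hvu⟩ h⟩
  obtain ⟨b, hb⟩ : ∃ b, ∀ u, R u v → u = b := by
    by_cases h : ∃ b, R b v
    · obtain ⟨b, hbv⟩ := h
      exact ⟨b, fun u huv => hR.1 huv hbv⟩
    · exact ⟨v, fun u huv => absurd ⟨u, huv⟩ h⟩
  have hsub : (SimpleGraph.fromRel R).neighborSet v ⊆ {a, b} := by
    rintro u ⟨-, hvu | huv⟩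
    exacts [.inl (ha u hvu), .inr (hb u huv)]
  calc _ ≤ ({a, b} : Set V).ncard := Set.ncard_le_ncard hsub
    _ ≤ ({b} : Set V).ncard + 1 := Set.ncard_insert_le a {b}
    _ = 2 := by rw [Set.ncard_singleton]

end MaximalPath

section LatticePath

variable {n : ℕ}

theorem wt_le (x : Fin n → Bool) : wt x ≤ n :=
  (Finset.card_filter_le _ _).trans (Finset.card_fin n).le

theorem onesUpTo_succ (x : Fin n → Bool) {j : ℕ} (hj : j < n) :
    onesUpTo x (j + 1) = onesUpTo x j + if x ⟨j, hj⟩ = true then 1 else 0 := by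
  simp only [onesUpTo, Finset.card_filter]
  rw [← Finset.sum_ite_eq_of_mem' Finset.univ ⟨j, hj⟩ (fun i => if x i = true then 1 else 0)
    (Finset.mem_univ _), ← Finset.sum_add_distrib]
  refine Finset.sum_congr rfl fun i _ => ?_
  by_cases hi : i = ⟨j, hj⟩
  · subst hi
    simp
  · have : i.val < j + 1 ↔ i.val < j :=
      ⟨fun h => lt_of_le_of_ne (Nat.lt_succ_iff.mp h) fun h' => hi (Fin.ext h'), by omega⟩
    simp only [this, hi, if_false, add_zero]

theorem onesUpTo_of_le (x : Fin n → Bool) {j : ℕ} (hj : n ≤ j) : onesUpTo x j = wt x := by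
  simp only [onesUpTo, wt]
  congr 1
  exact Finset.filter_congr fun i _ => and_iff_right (i.isLt.trans_le hj)

theorem hgt_zero (x : Fin n → Bool) : hgt x 0 = 0 := by
  simp [hgt, onesUpTo]

theorem hgt_of_le (x : Fin n → Bool) {j : ℕ} (hj : n ≤ j) : hgt x j = 2 * wt x - j := by
  rw [hgt, onesUpTo_of_le x hj]

theorem hgt_succ_of_true (x : Fin n → Bool) {j : ℕ} (hj : j < n) (hx : x ⟨j, hj⟩ = true) :
    hgt x (j + 1) = hgt x j + 1 := by
  simp only [hgt, onesUpTo_succ x hj, hx, if_true]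
  push_cast
  ring

theorem hgt_succ_of_false (x : Fin n → Bool) {j : ℕ} (hx : ∀ hj : j < n, x ⟨j, hj⟩ = false) :
    hgt x (j + 1) = hgt x j - 1 := by
  by_cases hj : j < n
  · simp only [hgt, onesUpTo_succ x hj, hx hj, Bool.false_eq_true, if_false]
    push_cast
    ring
  · rw [hgt_of_le x (by omega), hgt_of_le x (by omega)]
    push_cast
    ring

theorem hgt_succ_eq_or (x : Fin n → Bool) (j : ℕ) :
    hgt x (j + 1) = hgt x j + 1 ∨ hgt x (j + 1) = hgt x j - 1 := by
  by_cases h : ∃ hj : j < n, x ⟨j, hj⟩ = true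
  · obtain ⟨hj, hx⟩ := h
    exact .inl (hgt_succ_of_true x hj hx)
  · push Not at h
    exact .inr (hgt_succ_of_false x fun hj => by simpa using h hj)

theorem le_extLen (x : Fin n → Bool) : n ≤ extLen x := le_max_left _ _

theorem hgt_extLen_le (x : Fin n → Bool) : hgt x (extLen x) ≤ -1 := by
  have : 2 * wt x + 1 ≤ extLen x := le_max_right _ _
  rw [hgt_of_le x (le_extLen x)]
  omega

theorem isDownStep_of_hgt_succ (x : Fin n → Bool) {j : ℕ} (hj : j < extLen x)
    (h : hgt x (j + 1) = hgt x j - 1) : isDownStep x j := by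
  refine ⟨hj, fun hjn => ?_⟩
  by_contra hx
  have := hgt_succ_of_true x hjn (by simpa using hx)
  omega

theorem exists_isDownStep_hgt_eq (x : Fin n → Bool) {a b : ℕ} {h : ℤ} (hab : a ≤ b)
    (hb : b ≤ extLen x) (ha : h ≤ hgt x a) (hlt : hgt x b < h) :
    ∃ j, a ≤ j ∧ j < b ∧ isDownStep x j ∧ hgt x j = h := by
  induction b, hab using Nat.le_induction with
  | base => omega
  | succ b hab ih =>
    by_cases hh : hgt x b < h
    · obtain ⟨j, haj, hjb, hdown, hj⟩ := ih (by omega) hh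
      exact ⟨j, haj, by omega, hdown, hj⟩
    · rcases hgt_succ_eq_or x b with hup | hdown
      · omega
      · exact ⟨b, hab, by omega, isDownStep_of_hgt_succ x (by omega) hdown, by omega⟩

end LatticePath

section SetBit

variable {n : ℕ}

def setBit (x : Fin n → Bool) (d : ℕ) : Fin n → Bool := fun t => if t.val = d then true else x t

variable {x x' : Fin n → Bool} {d : ℕ}

theorem onesUpTo_setBit (hd : d < n) (hxd : x ⟨d, hd⟩ = false) (j : ℕ) :
    onesUpTo (setBit x d) j = onesUpTo x j + if d < j then 1 else 0 := by
  simp only [onesUpTo, Finset.card_filter]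
  rw [← Finset.sum_ite_eq_of_mem' Finset.univ (⟨d, hd⟩ : Fin n) (fun _ => if d < j then 1 else 0)
    (Finset.mem_univ _), ← Finset.sum_add_distrib]
  refine Finset.sum_congr rfl fun i _ => ?_
  by_cases hi : i = ⟨d, hd⟩
  · subst hi
    simp [setBit, hxd]
  · have : i.val ≠ d := fun h => hi (Fin.ext h)
    simp [setBit, hi, this]

theorem wt_setBit (hd : d < n) (hxd : x ⟨d, hd⟩ = false) : wt (setBit x d) = wt x + 1 := by
  rw [← onesUpTo_of_le _ le_rfl, onesUpTo_setBit hd hxd, onesUpTo_of_le x le_rfl, if_pos hd]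

theorem hgt_setBit (hd : d < n) (hxd : x ⟨d, hd⟩ = false) (j : ℕ) :
    hgt (setBit x d) j = hgt x j + if d < j then 2 else 0 := by
  simp only [hgt, onesUpTo_setBit hd hxd j]
  split_ifs <;> push_cast <;> ring

theorem hammingDist_setBit (hd : d < n) (hxd : x ⟨d, hd⟩ = false) :
    hammingDist x (setBit x d) = 1 := by
  rw [hammingDist, Finset.card_eq_one]
  refine ⟨⟨d, hd⟩, Finset.eq_singleton_iff_unique_mem.mpr ⟨by simp [setBit, hxd], ?_⟩⟩
  intro i hi
  by_contra hne
  have : i.val ≠ d := fun h => hne (Fin.ext h)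
  simp [setBit, this] at hi

theorem eq_of_setBit_eq (hd : d < n) (hxd : x ⟨d, hd⟩ = false) (hx'd : x' ⟨d, hd⟩ = false)
    (h : setBit x d = setBit x' d) : x = x' := by
  funext t
  by_cases ht : t.val = d
  · rw [show t = ⟨d, hd⟩ from Fin.ext ht, hxd, hx'd]
  · simpa [setBit, ht] using congrFun h t

end SetBit

section Rank

variable {n : ℕ} {x x' y : Fin n → Bool} {d d' : ℕ}

def LexPrecedes (x : Fin n → Bool) (j e : ℕ) : Prop :=
  hgt x e < hgt x j ∨ (hgt x j = hgt x e ∧ e < j)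

def downStepsBefore (x : Fin n → Bool) (e : ℕ) : Set ℕ :=
  {j | isDownStep x j ∧ LexPrecedes x j e}

theorem downStepsBefore_finite (x : Fin n → Bool) (e : ℕ) : (downStepsBefore x e).Finite :=
  (Set.finite_Iio (extLen x)).subset fun _ hj => hj.1.1

theorem downStepsBefore_ssubset {a b : ℕ} (ha : isDownStep x a) (hab : LexPrecedes x a b) :
    downStepsBefore x a ⊂ downStepsBefore x b := by
  have hsub : downStepsBefore x a ⊆ downStepsBefore x b := by
    rintro j ⟨hj, hja⟩
    refine ⟨hj, ?_⟩
    unfold LexPrecedes at *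
    omega
  refine (Set.ssubset_iff_of_subset hsub).mpr ⟨a, ⟨ha, hab⟩, ?_⟩
  rintro ⟨-, haa⟩
  unfold LexPrecedes at haa
  omega

/- In the next three lemmas `x` and `x'` are the preimages of `y` under flipping its up-steps
`d` and `d'`, and `hprec` says that `d'` precedes `d` in the order of the up-steps of `y^↓`
(decreasing ending height, ties from left to right). -/

theorem downStepsBefore_subset_of_setBit (hd : d < n) (hd' : d' < n)
    (hxd : x ⟨d, hd⟩ = false) (hx'd' : x' ⟨d', hd'⟩ = false)
    (hy : setBit x d = y) (hy' : setBit x' d' = y)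
    (hprec : hgt y d < hgt y d' ∨ (hgt y d' = hgt y d ∧ d' < d)) :
    downStepsBefore x' d' ⊆ downStepsBefore x d := by
  have hhx : ∀ j, hgt y j = hgt x j + if d < j then 2 else 0 := hy ▸ hgt_setBit hd hxd
  have hhx' : ∀ j, hgt y j = hgt x' j + if d' < j then 2 else 0 := hy' ▸ hgt_setBit hd' hx'd'
  have hxd_y : hgt x d = hgt y d := by simpa using (hhx d).symm
  have hx'd'_y : hgt x' d' = hgt y d' := by simpa using (hhx' d').symm
  have hext : extLen x' = extLen x := by
    have := wt_setBit hd hxd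
    have := wt_setBit hd' hx'd'
    simp only [extLen, hy, hy'] at *
    omega
  rintro j ⟨⟨hjl, hjb⟩, hord⟩
  have hjd' : j ≠ d' := by rintro rfl; unfold LexPrecedes at hord; omega
  refine ⟨⟨hext ▸ hjl, fun hjn => ?_⟩, ?_⟩
  · by_cases hjd : j = d
    · subst hjd
      exact hxd
    · have hxj : x ⟨j, hjn⟩ = x' ⟨j, hjn⟩ := by
        simpa [setBit, hjd, hjd'] using congrFun (hy.trans hy'.symm) ⟨j, hjn⟩
      rw [hxj]
      exact hjb hjn
  · have e := hhx j
    have e' := hhx' j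
    unfold LexPrecedes at *
    split_ifs at e e' <;> omega

/-- In each case the witness is a down-step of `x` at a suitable height, found by the discrete
intermediate value theorem. -/
theorem exists_lexPrecedes_not_lexPrecedes_of_setBit (hd : d < n) (hd' : d' < n)
    (hxd : x ⟨d, hd⟩ = false) (hx'd' : x' ⟨d', hd'⟩ = false)
    (hy : setBit x d = y) (hy' : setBit x' d' = y)
    (hprec : hgt y d < hgt y d' ∨ (hgt y d' = hgt y d ∧ d' < d)) :
    ∃ j, isDownStep x j ∧ LexPrecedes x j d ∧ ¬ LexPrecedes x' j d' := by
  have hhx : ∀ j, hgt y j = hgt x j + if d < j then 2 else 0 := hy ▸ hgt_setBit hd hxd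
  have hhx' : ∀ j, hgt y j = hgt x' j + if d' < j then 2 else 0 := hy' ▸ hgt_setBit hd' hx'd'
  have hxd_y : hgt x d = hgt y d := by simpa using (hhx d).symm
  have hx'd'_y : hgt x' d' = hgt y d' := by simpa using (hhx' d').symm
  have hup : hgt y (d' + 1) = hgt y d' + 1 :=
    hgt_succ_of_true y hd' (by simp [← hy', setBit])
  have := le_extLen x
  unfold LexPrecedes
  rcases lt_trichotomy d d' with hdd' | rfl | hd'd
  · by_cases hpos : 0 ≤ hgt y d
    · have e := hhx (d' + 1)
      rw [if_pos (by omega)] at e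
      obtain ⟨j, hj, -, hdown, hjh⟩ := exists_isDownStep_hgt_eq x (a := d' + 1) (h := hgt y d)
        (by omega) le_rfl (by omega) (by have := hgt_extLen_le x; omega)
      have e1 := hhx j
      have e2 := hhx' j
      rw [if_pos (by omega)] at e1 e2
      exact ⟨j, hdown, by omega, by omega⟩
    · obtain ⟨j, -, hjd, hdown, hjh⟩ := exists_isDownStep_hgt_eq x (a := 0) (b := d)
        (h := hgt y d + 1) (by omega) (by omega) (by rw [hgt_zero]; omega) (by omega)
      have e1 := hhx j
      have e2 := hhx' j
      rw [if_neg (by omega)] at e1 e2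
      exact ⟨j, hdown, by omega, by omega⟩
  · omega
  · have e := hhx (d' + 1)
    rw [if_neg (by omega)] at e
    obtain ⟨j, hj, hjd, hdown, hjh⟩ := exists_isDownStep_hgt_eq x (a := d' + 1) (b := d)
      (h := hgt y d + 1) (by omega) (by omega) (by omega) (by omega)
    have e1 := hhx j
    have e2 := hhx' j
    rw [if_neg (by omega)] at e1
    rw [if_pos (by omega)] at e2
    exact ⟨j, hdown, by omega, by omega⟩

theorem downStepsBefore_ssubset_of_setBit (hd : d < n) (hd' : d' < n)
    (hxd : x ⟨d, hd⟩ = false) (hx'd' : x' ⟨d', hd'⟩ = false)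
    (hy : setBit x d = y) (hy' : setBit x' d' = y)
    (hprec : hgt y d < hgt y d' ∨ (hgt y d' = hgt y d ∧ d' < d)) :
    downStepsBefore x' d' ⊂ downStepsBefore x d := by
  obtain ⟨j, hdown, hjd, hjd'⟩ :=
    exists_lexPrecedes_not_lexPrecedes_of_setBit hd hd' hxd hx'd' hy hy' hprec
  exact (Set.ssubset_iff_of_subset
    (downStepsBefore_subset_of_setBit hd hd' hxd hx'd' hy hy' hprec)).mpr
    ⟨j, ⟨hdown, hjd⟩, fun h => hjd' h.2⟩

end Rank

section LexUp

variable {n k i : ℕ} {x y : Fin n → Bool}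

theorem lexUp_wt (h : lexUp n k i x y) : wt y = wt x + 1 := by
  obtain ⟨-, d, hd, hdown, -, rfl⟩ := h
  exact wt_setBit hd (hdown.2 hd)

theorem lexUp_adj (h : lexUp n k i x y) : (cube n).Adj x y := by
  obtain ⟨-, d, hd, hdown, -, rfl⟩ := h
  exact hammingDist_setBit hd (hdown.2 hd)

theorem lexUp_rightUnique : RightUnique (lexUp n k i) := by
  rintro x _ _ ⟨-, d, -, hdown, hrank, rfl⟩ ⟨-, d', -, hdown', hrank', rfl⟩
  change (downStepsBefore x d).ncard = i at hrank
  change (downStepsBefore x d').ncard = i at hrank'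
  by_contra hne
  have hdd' : d ≠ d' := fun h => hne (h ▸ rfl)
  rcases (show LexPrecedes x d d' ∨ LexPrecedes x d' d by unfold LexPrecedes; omega) with h | h
  · have := Set.ncard_lt_ncard (downStepsBefore_ssubset hdown h) (downStepsBefore_finite x d')
    omega
  · have := Set.ncard_lt_ncard (downStepsBefore_ssubset hdown' h) (downStepsBefore_finite x d)
    omega

theorem lexUp_leftUnique : LeftUnique (lexUp n k i) := by
  rintro x x' y ⟨-, d, hd, hdown, hrank, hy⟩ ⟨-, d', hd', hdown', hrank', hy'⟩
  change (downStepsBefore x d).ncard = i at hrank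
  change (downStepsBefore x' d').ncard = i at hrank'
  change y = setBit x d at hy
  change y = setBit x' d' at hy'
  by_cases hdd' : d = d'
  · subst hdd'
    exact eq_of_setBit_eq hd (hdown.2 hd) (hdown'.2 hd) (hy.symm.trans hy')
  exfalso
  rcases (show (hgt y d < hgt y d' ∨ (hgt y d' = hgt y d ∧ d' < d)) ∨
      (hgt y d' < hgt y d ∨ (hgt y d = hgt y d' ∧ d < d')) by omega) with h | h
  · have := Set.ncard_lt_ncard (downStepsBefore_ssubset_of_setBit hd hd' (hdown.2 hd)
      (hdown'.2 hd') hy.symm hy'.symm h) (downStepsBefore_finite x d)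
    omega
  · have := Set.ncard_lt_ncard (downStepsBefore_ssubset_of_setBit hd' hd (hdown'.2 hd')
      (hdown.2 hd) hy'.symm hy.symm h) (downStepsBefore_finite x' d')
    omega

def lexUnion (n : ℕ) (iv : Fin n → ℕ) (x y : Fin n → Bool) : Prop :=
  ∃ k : Fin n, lexUp n k.val (iv k) x y

theorem lexUnion_biUnique (iv : Fin n → ℕ) : BiUnique (lexUnion n iv) := by
  constructor
  · rintro x x' y ⟨k, hk⟩ ⟨k', hk'⟩
    have : k = k' := Fin.ext <| by
      have := lexUp_wt hk; have := lexUp_wt hk'; have := hk.1; have := hk'.1; omega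
    subst this
    exact lexUp_leftUnique hk hk'
  · rintro x y y' ⟨k, hk⟩ ⟨k', hk'⟩
    have : k = k' := Fin.ext (hk.1.symm.trans hk'.1)
    subst this
    exact lexUp_rightUnique hk hk'

end LexUp

theorem lexical_union_is_chain_decomposition_general (n : ℕ) (iv : Fin n → ℕ) :
    (∀ v : Fin n → Bool,
      ((SimpleGraph.fromRel fun x y : Fin n → Bool =>
        ∃ k : Fin n, lexUp n k.val (iv k) x y).neighborSet v).ncard ≤ 2) ∧
    ∃ D : Set (List (Fin n → Bool)),
      (∀ c ∈ D, c ≠ [] ∧ c.Chain' (cube n).Adj ∧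
        ∃ a : ℕ, ∀ (t : ℕ) (h : t < c.length), wt (c.get ⟨t, h⟩) = a + t) ∧
      (∀ x : Fin n → Bool, ∃! c, c ∈ D ∧ x ∈ c) ∧
      (⋃ c ∈ D, chainEdges c) = {e : Sym2 (Fin n → Bool) |
        ∃ (k : Fin n) (x y : Fin n → Bool), lexUp n k.val (iv k) x y ∧ e = s(x, y)} := by
  have hw : ∀ ⦃x y⦄, lexUnion n iv x y → wt y = wt x + 1 := fun _ _ ⟨_, h⟩ => lexUp_wt h
  obtain ⟨D, hD, hcover, hedges⟩ := exists_path_decomposition hw wt_le (lexUnion_biUnique iv)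
  refine ⟨ncard_neighborSet_fromRel_le_two (lexUnion_biUnique iv), D, fun c hc => ?_, hcover, ?_⟩
  · obtain ⟨hne, hchain, hwt⟩ := hD c hc
    exact ⟨hne, hchain.imp fun _ _ ⟨_, h⟩ => lexUp_adj h, hwt⟩
  · rw [hedges]
    ext e
    constructor
    · rintro ⟨x, y, ⟨k, h⟩, rfl⟩
      exact ⟨k, x, y, h, rfl⟩
    · rintro ⟨k, x, y, h, rfl⟩
      exact ⟨x, y, ⟨k, h⟩, rfl⟩

/-- For a sequence `i = (i_0, …, i_{n−1})` with `0 ≤ i_k ≤ max{k, n−k−1}`, in the spanning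
subgraph `D_i` of the `n`-cube with edge set `⋃_{k=0}^{n−1} M^{i_k}_{n,k}` every vertex has
degree at most 2, and the components decompose the vertex set into chains: there is a
partition of the vertices into nonempty paths along which the Hamming weight increases by
exactly 1 in each step, whose edges are exactly the edges of `D_i`. -/
theorem lexical_union_is_chain_decomposition (n : ℕ) (hn : 1 ≤ n) (iv : Fin n → ℕ)
    (hb : ∀ k : Fin n, iv k ≤ max k.val (n - k.val - 1)) :
    (∀ v : Fin n → Bool,
      ((SimpleGraph.fromRel fun x y : Fin n → Bool =>
        ∃ k : Fin n, lexUp n k.val (iv k) x y).neighborSet v).ncard ≤ 2) ∧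
    ∃ D : Set (List (Fin n → Bool)),
      (∀ c ∈ D, c ≠ [] ∧ c.Chain' (cube n).Adj ∧
        ∃ a : ℕ, ∀ (t : ℕ) (h : t < c.length), wt (c.get ⟨t, h⟩) = a + t) ∧
      (∀ x : Fin n → Bool, ∃! c, c ∈ D ∧ x ∈ c) ∧
      (⋃ c ∈ D, chainEdges c) = {e : Sym2 (Fin n → Bool) |
        ∃ (k : Fin n) (x y : Fin n → Bool), lexUp n k.val (iv k) x y ∧ e = s(x, y)} :=
  lexical_union_is_chain_decomposition_general n iv
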